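/- arXiv:0711.2980 — 4 statements merged into one kernel-verified Lean document; each statement's English description precedes it below -/
import Mathlib

section
/- For every α > 0 there exists β > 0 such that for all h with 0 < h ≤ 1 and all real k, |sin(hk)/h| ≤ α |(cos(hk) − 1)/h²| + β. -/
/-
Since sin² θ = (1 - cos θ)(1 + cos θ) ≤ 2 (1 - cos θ), the Laplacian symbol dominates half
the square of the derivative symbol: α |(cos(hk) - 1)/h²| ≥ (α/2) (sin(hk)/h)². The theorem then
follows from the AM-GM bound |x| ≤ (α/2) x² + 1/(2α), so β = 1/(2α) works for every h.
-/

theorem Real.sin_sq_le_two_mul_one_sub_cos (θ : ℝ) : Real.sin θ ^ 2 ≤ 2 * (1 - Real.cos θ) := by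
  nlinarith [Real.sin_sq_add_cos_sq θ, Real.cos_le_one θ, Real.neg_one_le_cos θ]

theorem abs_le_mul_sq_div_two_add_inv {α : ℝ} (hα : 0 < α) (x : ℝ) :
    |x| ≤ α * x ^ 2 / 2 + 1 / (2 * α) := by
  have hsq : 0 ≤ (α * |x| - 1) ^ 2 / (2 * α) := by positivity
  have hexpand : (α * |x| - 1) ^ 2 / (2 * α) = α * x ^ 2 / 2 + 1 / (2 * α) - |x| := by
    field_simp
    rw [← sq_abs x]
    ring
  linarith

theorem stmt_5 (α : ℝ) (hα : 0 < α) :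
    ∃ β : ℝ, 0 < β ∧ ∀ h : ℝ, 0 < h → h ≤ 1 → ∀ k : ℝ,
      |Real.sin (h * k) / h| ≤ α * |(Real.cos (h * k) - 1) / h ^ 2| + β := by
  refine ⟨1 / (2 * α), by positivity, fun h _ _ k => ?_⟩
  have hlap : α * (Real.sin (h * k) / h) ^ 2 / 2 ≤ α * |(Real.cos (h * k) - 1) / h ^ 2| := by
    rw [abs_div, abs_of_nonpos (by linarith [Real.cos_le_one (h * k)]), abs_pow, sq_abs]
    calc α * (Real.sin (h * k) / h) ^ 2 / 2 = α * (Real.sin (h * k) ^ 2 / 2 / h ^ 2) := by ring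
      _ ≤ α * (-(Real.cos (h * k) - 1) / h ^ 2) := by
        gcongr
        linarith [Real.sin_sq_le_two_mul_one_sub_cos (h * k)]
  linarith [abs_le_mul_sq_div_two_add_inv hα (Real.sin (h * k) / h)]
end

section
/- Let Δ_h and ∇_h be the discrete Laplacian and symmetric difference operators on periodic functions on the lattice X_m = h·ℤ ∩ [−L, L] (with periodic identification), i.e. (∇_h f)(x) = (f(x+h) − f(x−h))/(2h) and (Δ_h f)(x) = (f(x+h) + f(x−h) − 2f(x))/h². Then for every α > 0 there exists β > 0, independent of h ∈ (0, 1], such that ‖∇_h f‖₂ ≤ α ‖Δ_h f‖₂ + β ‖f‖₂ for all f. -/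
/-!
Write `p, q, r` for `f (x + a), f (x - a), f x`. Pointwise `(p - q)² + (p + q)² = 2p² + 2q²`, and shifts
preserve `∑ f²`, so summation gives `∑ (p - q)² = -∑ (p + q - 2r)(p + q + 2r)`: on the Fourier side
this is `4 sin² k = (2 - 2 cos k)(2 + 2 cos k)`. Cauchy–Schwarz and `‖p + q + 2r‖ ≤ 4 ‖f‖` then give
the interpolation inequality `‖∇ₕ f‖² ≤ ‖f‖ ‖Δₕ f‖` for every `h ≠ 0`, and AM-GM turns it into
`‖∇ₕ f‖ ≤ α ‖Δₕ f‖ + ‖f‖ / (4α)`.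
-/

open Finset Real

lemma sqrt_sum_div_sq {ι : Type*} (s : Finset ι) (F : ι → ℝ) (c : ℝ) :
    √(∑ x ∈ s, (F x / c) ^ 2) = √(∑ x ∈ s, F x ^ 2) / |c| := by
  simp only [div_pow, ← sum_div]
  rw [sqrt_div' _ (sq_nonneg c), sqrt_sq_eq_abs]

lemma le_mul_add_div_of_sq_le_mul {u v w α : ℝ} (hα : 0 < α) (hu : 0 ≤ u) (hv : 0 ≤ v)
    (hw : 0 ≤ w) (h : u ^ 2 ≤ w * v) : u ≤ α * v + 1 / (4 * α) * w := by
  refine (pow_le_pow_iff_left₀ hu (by positivity) two_ne_zero).mp (h.trans ?_)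
  have hαα : α * (1 / (4 * α)) = 1 / 4 := by field_simp
  nlinarith [sq_nonneg (α * v - 1 / (4 * α) * w)]

section ShiftInvariantSums

variable {G : Type*} [AddCommGroup G] [Fintype G]

lemma sum_sq_centralDiff_eq (f : G → ℝ) (a : G) :
    ∑ x, (f (x + a) - f (x - a)) ^ 2 =
      -∑ x, (f (x + a) + f (x - a) - 2 * f x) * (f (x + a) + f (x - a) + 2 * f x) := by
  have hplus : ∑ x, f (x + a) ^ 2 = ∑ x, f x ^ 2 := Equiv.sum_comp (Equiv.addRight a) (f · ^ 2)
  have hminus : ∑ x, f (x - a) ^ 2 = ∑ x, f x ^ 2 := Equiv.sum_comp (Equiv.subRight a) (f · ^ 2)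
  rw [eq_neg_iff_add_eq_zero, ← sum_add_distrib]
  calc ∑ x, ((f (x + a) - f (x - a)) ^ 2
          + (f (x + a) + f (x - a) - 2 * f x) * (f (x + a) + f (x - a) + 2 * f x))
      = ∑ x, (2 * f (x + a) ^ 2 + 2 * f (x - a) ^ 2 - 4 * f x ^ 2) :=
        sum_congr rfl fun x _ => by ring
    _ = 0 := by
        rw [sum_sub_distrib, sum_add_distrib, ← mul_sum, ← mul_sum, ← mul_sum, hplus, hminus]
        ring

lemma sum_sq_shift_add_shift_add_two_mul_le (f : G → ℝ) (a : G) :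
    ∑ x, (f (x + a) + f (x - a) + 2 * f x) ^ 2 ≤ 16 * ∑ x, f x ^ 2 := by
  have hplus : ∑ x, f (x + a) ^ 2 = ∑ x, f x ^ 2 := Equiv.sum_comp (Equiv.addRight a) (f · ^ 2)
  have hminus : ∑ x, f (x - a) ^ 2 = ∑ x, f x ^ 2 := Equiv.sum_comp (Equiv.subRight a) (f · ^ 2)
  calc ∑ x, (f (x + a) + f (x - a) + 2 * f x) ^ 2
      ≤ ∑ x, (4 * f (x + a) ^ 2 + 4 * f (x - a) ^ 2 + 8 * f x ^ 2) :=
        sum_le_sum fun x _ => by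
          nlinarith [sq_nonneg (f (x + a) - f (x - a)), sq_nonneg (f (x + a) - f x),
            sq_nonneg (f (x - a) - f x)]
    _ = 16 * ∑ x, f x ^ 2 := by
        rw [sum_add_distrib, sum_add_distrib, ← mul_sum, ← mul_sum, ← mul_sum, hplus, hminus]
        ring

lemma sum_sq_centralDiff_le (f : G → ℝ) (a : G) :
    ∑ x, (f (x + a) - f (x - a)) ^ 2 ≤
      4 * √(∑ x, f x ^ 2) * √(∑ x, (f (x + a) + f (x - a) - 2 * f x) ^ 2) := by
  have hS : √(∑ x, (f (x + a) + f (x - a) + 2 * f x) ^ 2) ≤ 4 * √(∑ x, f x ^ 2) := by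
    calc √(∑ x, (f (x + a) + f (x - a) + 2 * f x) ^ 2)
        ≤ √(4 ^ 2 * ∑ x, f x ^ 2) := by
          gcongr
          linarith [sum_sq_shift_add_shift_add_two_mul_le f a]
      _ = 4 * √(∑ x, f x ^ 2) := by rw [sqrt_mul' _ (sum_nonneg fun _ _ => sq_nonneg _),
          sqrt_sq (by norm_num)]
  have hCS := Real.sum_mul_le_sqrt_mul_sqrt univ (fun x => -(f (x + a) + f (x - a) - 2 * f x))
    (fun x => f (x + a) + f (x - a) + 2 * f x)
  simp only [neg_mul, sum_neg_distrib, neg_sq] at hCS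
  rw [sum_sq_centralDiff_eq]
  nlinarith [sqrt_nonneg (∑ x, (f (x + a) + f (x - a) - 2 * f x) ^ 2)]

lemma sq_sqrt_sum_sq_centralDiff_div_le (f : G → ℝ) (a : G) {h : ℝ} (hh : h ≠ 0) :
    √(∑ x, ((f (x + a) - f (x - a)) / (2 * h)) ^ 2) ^ 2 ≤
      √(∑ x, f x ^ 2) * √(∑ x, ((f (x + a) + f (x - a) - 2 * f x) / h ^ 2) ^ 2) := by
  rw [sqrt_sum_div_sq, sqrt_sum_div_sq, div_pow, sq_sqrt (sum_nonneg fun _ _ => sq_nonneg _),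
    abs_of_nonneg (sq_nonneg h), abs_mul, abs_two, mul_pow, sq_abs, mul_div_assoc',
    div_le_div_iff₀ (by positivity) (by positivity)]
  nlinarith [sum_sq_centralDiff_le f a, sq_nonneg h]

end ShiftInvariantSums

theorem stmt_6 (α : ℝ) (hα : 0 < α) :
    ∃ β : ℝ, 0 < β ∧ ∀ h : ℝ, 0 < h → h ≤ 1 →
      ∀ (n : ℕ) [NeZero n], ∀ f : ZMod n → ℝ,
        Real.sqrt (∑ x : ZMod n, ((f (x + 1) - f (x - 1)) / (2 * h)) ^ 2) ≤
          α * Real.sqrt (∑ x : ZMod n, ((f (x + 1) + f (x - 1) - 2 * f x) / h ^ 2) ^ 2) +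
            β * Real.sqrt (∑ x : ZMod n, f x ^ 2) := by
  refine ⟨1 / (4 * α), by positivity, fun h hh _ n _ f => ?_⟩
  exact le_mul_add_div_of_sq_le_mul hα (sqrt_nonneg _) (sqrt_nonneg _) (sqrt_nonneg _)
    (sq_sqrt_sum_sq_centralDiff_div_le f 1 hh.ne')
end

section
/- (Sup process block-diagonalization) Let L be a Markov generator on the finite ordered lattice X = {x₁ < … < x_M} and define the joint generator of (x_t, sup_{s≤t} x_s) by L̃(x,y;x',y') = L(x,x')·[δ_{y,y'} if x' < y, and δ_{x',y'} if x' ≥ y]. Let V(x,y;x',y') = δ_{x,x'} 1(y' ≥ y), with inverse V^{-1}(x,y;x',y') = δ_{x,x'} (δ_{y',y} − δ_{y', y+h}). Then V^{-1} L̃ V is block-diagonal in y: (V^{-1} L̃ V)(x,y;x',y') = L(x,x') 1(x' ≤ y) δ_{y,y'}. In particular each block is the generator L with absorption on {x' > y}. -/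
/-!
Write `U` for the upper-triangular all-ones matrix in `y` (cumulative sum) and `D` for the
forward difference, so that `V = 1 ⊗ U`, `V⁻¹ = 1 ⊗ D` and `D U = 1`. The `(x, x')`-block of
`L̃` is `L x x' • P_{x'}`, where `P_a` is the matrix of the deterministic map `y ↦ max a y`.
Hence the `(x, x')`-block of `V⁻¹ L̃ V` is `L x x' • D P_{x'} U`. Since both `P_a U` and
`U diag(1(a ≤ y))` have entries `1(max a y ≤ y')`, the product `D P_a U` is `diag(1(a ≤ y))`.
-/

open Matrix
open scoped Kronecker

namespace Matrix

variable {m n R : Type*} [DecidableEq m] [CommSemiring R]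

theorem one_kronecker_eq_comp_diagonal (A : Matrix n n R) :
    (1 : Matrix m m R) ⊗ₖ A = comp m m n n R (diagonal fun _ => A) := by
  ext ⟨x, y⟩ ⟨x', y'⟩
  by_cases h : x = x' <;> simp [h]

theorem one_kronecker_mul_comp_mul_one_kronecker [Fintype m] [Fintype n] (A B : Matrix n n R)
    (K : Matrix m m (Matrix n n R)) :
    (1 : Matrix m m R) ⊗ₖ A * comp m m n n R K * (1 : Matrix m m R) ⊗ₖ B =
      comp m m n n R (of fun x x' => A * K x x' * B) := by
  simp only [one_kronecker_eq_comp_diagonal, ← compRingEquiv_apply, ← map_mul]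
  congr 1
  ext1 x x'
  rw [mul_diagonal, diagonal_mul, of_apply]

end Matrix

theorem Fin.sum_ite_val_eq {n : ℕ} {M : Type*} [AddCommMonoid M] (k : ℕ) (f : Fin n → M) :
    ∑ b : Fin n, (if (b : ℕ) = k then f b else 0) = if h : k < n then f ⟨k, h⟩ else 0 := by
  split_ifs with h
  · have hk (b : Fin n) : (b : ℕ) = k ↔ b = ⟨k, h⟩ := by simp [Fin.ext_iff]
    simp_rw [hk, Fintype.sum_ite_eq']
  · exact Finset.sum_eq_zero fun b _ => if_neg (by omega)

def cumSumMatrix (n R : Type*) [LE n] [DecidableLE n] [Zero R] [One R] : Matrix n n R :=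
  of fun y y' => if y ≤ y' then 1 else 0

-- The difference is taken in `ℕ`, so the top row has no `-1` entry.
def diffMatrix (n : ℕ) (R : Type*) [Ring R] : Matrix (Fin n) (Fin n) R :=
  of fun y y' => (if y' = y then 1 else 0) - (if (y' : ℕ) = (y : ℕ) + 1 then 1 else 0)

def maxMatrix {n R : Type*} [LinearOrder n] [Zero R] [One R] (a : n) : Matrix n n R :=
  of fun y y' => if y' = max a y then 1 else 0

section RunningMaximum

variable {n R : Type*}

theorem maxMatrix_apply [LinearOrder n] [Zero R] [One R] (a y y' : n) :
    (maxMatrix a : Matrix n n R) y y' =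
      if a < y then (if y' = y then 1 else 0) else (if y' = a then 1 else 0) := by
  rcases lt_or_ge a y with h | h
  · rw [if_pos h, maxMatrix, of_apply, max_eq_right h.le]
  · rw [if_neg h.not_gt, maxMatrix, of_apply, max_eq_left h]

theorem maxMatrix_mul_cumSumMatrix [Fintype n] [LinearOrder n] [NonAssocSemiring R] (a : n) :
    maxMatrix a * cumSumMatrix n R =
      cumSumMatrix n R * diagonal fun y => if a ≤ y then 1 else 0 := by
  ext y y'
  rw [mul_diagonal, mul_apply]
  simp only [maxMatrix, cumSumMatrix, of_apply, ite_mul, one_mul, zero_mul, Finset.sum_ite_eq',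
    Finset.mem_univ, if_true, max_le_iff, and_comm (a := a ≤ y'), ite_and]

theorem diffMatrix_mul_apply {n : ℕ} [Ring R] (N : Matrix (Fin n) (Fin n) R) (y y' : Fin n) :
    (diffMatrix n R * N) y y' = N y y' - if h : (y : ℕ) + 1 < n then N ⟨y + 1, h⟩ y' else 0 := by
  simp only [mul_apply, diffMatrix, of_apply, sub_mul, ite_mul, one_mul, zero_mul,
    Finset.sum_sub_distrib, Fintype.sum_ite_eq', Fin.sum_ite_val_eq]

theorem diffMatrix_mul_cumSumMatrix (n : ℕ) [Ring R] :
    diffMatrix n R * cumSumMatrix (Fin n) R = 1 := by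
  ext y y'
  rw [diffMatrix_mul_apply, one_apply]
  simp only [cumSumMatrix, of_apply, Fin.le_def, Fin.ext_iff]
  split_ifs <;> first | omega | norm_num

theorem cumSumMatrix_mul_diffMatrix (n : ℕ) [CommRing R] :
    cumSumMatrix (Fin n) R * diffMatrix n R = 1 :=
  mul_eq_one_comm.1 (diffMatrix_mul_cumSumMatrix n)

theorem diffMatrix_mul_maxMatrix_mul_cumSumMatrix {n : ℕ} [Ring R] (a : Fin n) :
    diffMatrix n R * maxMatrix a * cumSumMatrix (Fin n) R =
      diagonal fun y => if a ≤ y then 1 else 0 := by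
  rw [Matrix.mul_assoc, maxMatrix_mul_cumSumMatrix, ← Matrix.mul_assoc,
    diffMatrix_mul_cumSumMatrix, Matrix.one_mul]

end RunningMaximum

/-- Block-diagonalization of the joint generator of a diffusion and its running
supremum by the cumulative-sum operator `V` in the `y`-variable. -/
theorem stmt_15 (M : ℕ) (L : Matrix (Fin M) (Fin M) ℝ)
    (Ltilde V Vinv : Matrix (Fin M × Fin M) (Fin M × Fin M) ℝ)
    (hLt : ∀ x y x' y', Ltilde (x, y) (x', y') =
      L x x' * (if x' < y then (if y' = y then 1 else 0) else (if y' = x' then 1 else 0)))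
    (hV : ∀ x y x' y', V (x, y) (x', y') =
      (if x = x' then 1 else 0) * (if y ≤ y' then 1 else 0))
    (hVinv : ∀ x y x' y', Vinv (x, y) (x', y') =
      (if x = x' then 1 else 0) *
        ((if y' = y then 1 else 0) - (if (y' : ℕ) = (y : ℕ) + 1 then 1 else 0))) :
    V * Vinv = 1 ∧ Vinv * V = 1 ∧
      ∀ x y x' y', (Vinv * Ltilde * V) (x, y) (x', y') =
        L x x' * (if x' ≤ y then 1 else 0) * (if y = y' then 1 else 0) := by
  have hV' : V = (1 : Matrix (Fin M) (Fin M) ℝ) ⊗ₖ cumSumMatrix (Fin M) ℝ := by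
    ext ⟨x, y⟩ ⟨x', y'⟩
    rw [hV, kronecker_apply, one_apply, cumSumMatrix, of_apply]
  have hVinv' : Vinv = (1 : Matrix (Fin M) (Fin M) ℝ) ⊗ₖ diffMatrix M ℝ := by
    ext ⟨x, y⟩ ⟨x', y'⟩
    rw [hVinv, kronecker_apply, one_apply, diffMatrix, of_apply]
  have hLt' : Ltilde = comp _ _ _ _ ℝ (of fun x x' => L x x' • maxMatrix x') := by
    ext ⟨x, y⟩ ⟨x', y'⟩
    rw [hLt, comp_apply, of_apply, Matrix.smul_apply, maxMatrix_apply, smul_eq_mul]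
  refine ⟨?_, ?_, fun x y x' y' => ?_⟩
  · rw [hV', hVinv', ← mul_kronecker_mul, Matrix.one_mul, cumSumMatrix_mul_diffMatrix,
      one_kronecker_one]
  · rw [hV', hVinv', ← mul_kronecker_mul, Matrix.one_mul, diffMatrix_mul_cumSumMatrix,
      one_kronecker_one]
  · rw [hVinv', hLt', hV', one_kronecker_mul_comp_mul_one_kronecker]
    simp only [comp_apply, of_apply, Matrix.mul_smul, Matrix.smul_mul,
      diffMatrix_mul_maxMatrix_mul_cumSumMatrix, Matrix.smul_apply, diagonal_apply, smul_eq_mul]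
    split_ifs <;> simp
end

section
/- (Sup process kernel formula) With the notation of the sup-process block diagonalization, let û(x,x';y,t) = e^{t L_y}(x,x') where L_y(x,x') = L(x,x') 1(x' ≤ y) is the generator with absorption above level y. Then the joint kernel of the pair (x_t, sup_{s≤t} x_s) started from (x, y) satisfies u(x,y;x',y';t) = δ(y−y') û(x,x';y,t) + 1(y' > y) (û(x,x';y',t) − û(x,x';y'−h,t)). -/
/-!
In the coordinates (position, level) the cumulative operator `V` is the identity in the
position and the tail sum `1(y ≤ y')` in the level, while `ũ` is block diagonal in the level with
blocks `û_y = e^{t L_y}`. An entry of `V ũ V⁻¹` is therefore the scalar sum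
`∑_b 1(y ≤ b) û_b(x, x') (δ(b = y') - δ(b + 1 = y'))`, in which only `b = y'` and `b = y' - 1`
contribute.
-/

open Matrix Finset
open scoped Kronecker

theorem Matrix.one_kronecker_mul_blockDiagonal_mul_one_kronecker_apply
    {ι κ R : Type*} [Fintype ι] [DecidableEq ι] [Fintype κ] [DecidableEq κ] [CommSemiring R]
    (v w : Matrix κ κ R) (u : κ → Matrix ι ι R) (x x' : ι) (y y' : κ) :
    (((1 : Matrix ι ι R) ⊗ₖ v) * blockDiagonal u * ((1 : Matrix ι ι R) ⊗ₖ w)) (x, y) (x', y') =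
      (v * diagonal (fun b => u b x x') * w) y y' := by
  simp [mul_apply, Fintype.sum_prod_type, blockDiagonal_apply, one_apply, ite_mul, mul_ite,
    diagonal_apply, sum_ite_eq, sum_ite_eq']

namespace Fin

def cumulative (M : ℕ) (R : Type*) [Ring R] : Matrix (Fin M) (Fin M) R :=
  of fun y y' => if y ≤ y' then 1 else 0

def finiteDifference (M : ℕ) (R : Type*) [Ring R] : Matrix (Fin M) (Fin M) R :=
  of fun y y' => (if y' = y then 1 else 0) - (if (y' : ℕ) = (y : ℕ) + 1 then 1 else 0)

variable {R : Type*} [Ring R] {M : ℕ}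

theorem sum_ite_le_mul_ite_eq_succ (y y' : Fin M) (f : Fin M → R) :
    ∑ b, (if y ≤ b then 1 else 0) * f b * (if (y' : ℕ) = (b : ℕ) + 1 then 1 else 0) =
      if y < y' then f ⟨(y' : ℕ) - 1, Nat.lt_of_le_of_lt (Nat.sub_le _ _) y'.isLt⟩ else 0 := by
  rw [sum_eq_single ⟨(y' : ℕ) - 1, Nat.lt_of_le_of_lt (Nat.sub_le _ _) y'.isLt⟩]
  · simp only [ite_mul, one_mul, zero_mul, mul_ite, mul_one, mul_zero, ← ite_and]
    exact if_congr (by simp only [Fin.le_def, Fin.lt_def]; omega) rfl rfl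
  · intro b _ hb
    rw [if_neg (show ¬ (y' : ℕ) = b + 1 from fun h => hb (Fin.ext (by simp only; omega))),
      mul_zero]
  · simp

theorem cumulative_mul_diagonal_mul_finiteDifference_apply (f : Fin M → R) (y y' : Fin M) :
    (cumulative M R * diagonal f * finiteDifference M R) y y' =
      (if y = y' then 1 else 0) * f y + (if y < y' then 1 else 0) *
        (f y' - f ⟨(y' : ℕ) - 1, Nat.lt_of_le_of_lt (Nat.sub_le _ _) y'.isLt⟩) := by
  rw [mul_apply]
  simp only [mul_diagonal, cumulative, finiteDifference, of_apply, mul_sub, sum_sub_distrib,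
    sum_ite_le_mul_ite_eq_succ]
  simp only [mul_ite, mul_one, mul_zero, sum_ite_eq, mem_univ, if_true]
  rcases lt_trichotomy y y' with h | rfl | h
  · simp [h, h.le, h.ne]
  · simp
  · simp [h.not_ge, h.not_gt, h.ne']

end Fin

theorem stmt_16_general (M : ℕ)
    (uhat : Fin M → Matrix (Fin M) (Fin M) ℝ)
    (V Vinv utilde : Matrix (Fin M × Fin M) (Fin M × Fin M) ℝ)
    (hV : ∀ x y x' y', V (x, y) (x', y') =
      (if x = x' then 1 else 0) * (if y ≤ y' then 1 else 0))
    (hVinv : ∀ x y x' y', Vinv (x, y) (x', y') =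
      (if x = x' then 1 else 0) *
        ((if y' = y then 1 else 0) - (if (y' : ℕ) = (y : ℕ) + 1 then 1 else 0)))
    (hut : ∀ x y x' y', utilde (x, y) (x', y') =
      (if y = y' then 1 else 0) * uhat y x x') :
    ∀ x y x' y', (V * utilde * Vinv) (x, y) (x', y') =
      (if y = y' then 1 else 0) * uhat y x x' +
        (if y < y' then 1 else 0) *
          (uhat y' x x' -
            uhat ⟨(y' : ℕ) - 1, Nat.lt_of_le_of_lt (Nat.sub_le _ _) y'.isLt⟩ x x') := by
  have hV' : V = (1 : Matrix (Fin M) (Fin M) ℝ) ⊗ₖ Fin.cumulative M ℝ := by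
    ext ⟨x, y⟩ ⟨x', y'⟩
    simp [hV, Fin.cumulative, one_apply]
  have hVinv' : Vinv = (1 : Matrix (Fin M) (Fin M) ℝ) ⊗ₖ Fin.finiteDifference M ℝ := by
    ext ⟨x, y⟩ ⟨x', y'⟩
    simp [hVinv, Fin.finiteDifference, one_apply]
  have hut' : utilde = blockDiagonal uhat := by
    ext ⟨x, y⟩ ⟨x', y'⟩
    simp [hut, blockDiagonal_apply]
  intro x y x' y'
  rw [hV', hVinv', hut', one_kronecker_mul_blockDiagonal_mul_one_kronecker_apply,
    Fin.cumulative_mul_diagonal_mul_finiteDifference_apply]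

/-- The joint kernel of `(x_t, sup_{s ≤ t} x_s)`: conjugating the block-diagonal
semigroup (built from the generators with absorption above level `y`) by the
cumulative operator `V` yields the explicit formula for the joint kernel. -/
theorem stmt_16 (M : ℕ) (L : Matrix (Fin M) (Fin M) ℝ) (t : ℝ) (ht : 0 ≤ t)
    (Ly : Fin M → Matrix (Fin M) (Fin M) ℝ)
    (hLy : ∀ y x x', Ly y x x' = L x x' * (if x' ≤ y then 1 else 0))
    (uhat : Fin M → Matrix (Fin M) (Fin M) ℝ)
    (huhat : ∀ y, uhat y = NormedSpace.exp (t • Ly y))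
    (V Vinv utilde : Matrix (Fin M × Fin M) (Fin M × Fin M) ℝ)
    (hV : ∀ x y x' y', V (x, y) (x', y') =
      (if x = x' then 1 else 0) * (if y ≤ y' then 1 else 0))
    (hVinv : ∀ x y x' y', Vinv (x, y) (x', y') =
      (if x = x' then 1 else 0) *
        ((if y' = y then 1 else 0) - (if (y' : ℕ) = (y : ℕ) + 1 then 1 else 0)))
    (hut : ∀ x y x' y', utilde (x, y) (x', y') =
      (if y = y' then 1 else 0) * uhat y x x') :
    ∀ x y x' y', (V * utilde * Vinv) (x, y) (x', y') =
      (if y = y' then 1 else 0) * uhat y x x' +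
        (if y < y' then 1 else 0) *
          (uhat y' x x' -
            uhat ⟨(y' : ℕ) - 1, Nat.lt_of_le_of_lt (Nat.sub_le _ _) y'.isLt⟩ x x') :=
  stmt_16_general M uhat V Vinv utilde hV hVinv hut
end
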